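/- There exists a measurable radial weight λ on the unit disc 𝔻 ⊂ ℂ with 1/C ≤ λ ≤ C for some C > 0 such that the weighted Bergman kernel B_λ(z,w) = ∑_{n≥0} α_n (z w̄)^n, where α_n = 1/(2π ∫₀¹ r^{2n+1} λ(r) dr), has a zero in 𝔻 × 𝔻. -/

import Mathlib

/-!
Take the step weight `λ = 101` on `[0, 1/10]` and `λ = 1` on `(1/10, 1)`. Its moments give
`α_n = (n + 1) / (π (1 + 100⁻ⁿ))`, so on the real segment `z w̄ = x ∈ (-1, 0]` the kernel is
`π⁻¹ ∑ (n + 1) xⁿ / (1 + 100⁻ⁿ)`. At `x = 0` this is `1 / (2π) > 0`. Comparing termwise with the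
unweighted kernel `∑ (n + 1) xⁿ = (1 - x)⁻²`, the heavy mass near the origin halves the constant
term while the higher terms move by at most `(n + 1) 100⁻ⁿ`; at `x = -9/16` the loss of the
constant term outweighs `(1 - x)⁻²`, and the intermediate value theorem gives a zero.
-/

open MeasureTheory Real intervalIntegral Set

lemma hasSum_succ_mul_geometric {x : ℝ} (hx : |x| < 1) :
    HasSum (fun n : ℕ => ((n : ℝ) + 1) * x ^ n) (1 / (1 - x) ^ 2) := by
  simpa using hasSum_choose_mul_geometric_of_norm_lt_one 1 (r := x) (by rwa [Real.norm_eq_abs])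

lemma div_one_add_le_add {y p : ℝ} (hy : -1 ≤ y) (hp : 0 ≤ p) : y / (1 + p) ≤ y + p := by
  rw [div_le_iff₀ (by positivity)]
  nlinarith

noncomputable def stepWeight (K δ r : ℝ) : ℝ := if r ≤ δ then K else 1

lemma measurable_stepWeight (K δ : ℝ) : Measurable (stepWeight K δ) :=
  Measurable.ite measurableSet_Iic measurable_const measurable_const

lemma integral_pow_mul_stepWeight (K : ℝ) {δ : ℝ} (hδ0 : 0 ≤ δ) (hδ1 : δ ≤ 1) (m : ℕ) :
    ∫ r in (0 : ℝ)..1, r ^ m * stepWeight K δ r = (1 + (K - 1) * δ ^ (m + 1)) / (m + 1) := by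
  have hlow : EqOn (fun r => r ^ m * stepWeight K δ r) (fun r => r ^ m * K) (Ioo 0 δ) :=
    fun r hr => by simp [stepWeight, hr.2.le]
  have hhigh : EqOn (fun r => r ^ m * stepWeight K δ r) (fun r => r ^ m) (Ioo δ 1) :=
    fun r hr => by simp [stepWeight, not_le.2 hr.1]
  have hint_low : IntervalIntegrable (fun r => r ^ m * stepWeight K δ r) volume 0 δ :=
    (Continuous.intervalIntegrable (by fun_prop) _ _).congr_uIoo (uIoo_of_le hδ0 ▸ hlow.symm)
  have hint_high : IntervalIntegrable (fun r => r ^ m * stepWeight K δ r) volume δ 1 :=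
    (Continuous.intervalIntegrable (by fun_prop) _ _).congr_uIoo (uIoo_of_le hδ1 ▸ hhigh.symm)
  rw [← integral_add_adjacent_intervals hint_low hint_high, integral_congr_Ioo_of_le hδ0 hlow,
    integral_congr_Ioo_of_le hδ1 hhigh, intervalIntegral.integral_mul_const, integral_pow,
    integral_pow]
  field_simp
  ring

lemma bergmanCoeff_stepWeight {δ : ℝ} (hδ0 : 0 < δ) (hδ1 : δ ≤ 1) (n : ℕ) :
    1 / (2 * π * ∫ r in (0 : ℝ)..1, r ^ (2 * n + 1) * stepWeight (1 + δ⁻¹ ^ 2) δ r)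
      = π⁻¹ * (((n : ℝ) + 1) / (1 + (δ ^ 2) ^ n)) := by
  rw [integral_pow_mul_stepWeight _ hδ0.le hδ1, add_sub_cancel_left, ← pow_mul,
    show 2 * n + 1 + 1 = 2 + 2 * n by ring, pow_add, ← mul_assoc, ← mul_pow,
    inv_mul_cancel₀ hδ0.ne', one_pow, one_mul]
  push_cast
  field_simp
  ring

section KernelSeries

/-- For the weight `stepWeight (1 + δ⁻²) δ` and `q = δ²`, `π⁻¹ * kernelSeries q (z * conj w)` is
the weighted Bergman kernel `B_λ(z, w)`. -/
noncomputable def kernelSeries (q x : ℝ) : ℝ := ∑' n : ℕ, ((n : ℝ) + 1) / (1 + q ^ n) * x ^ n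

variable {q : ℝ}

lemma abs_kernelSeries_term_le (hq : 0 ≤ q) (n : ℕ) (x : ℝ) :
    |((n : ℝ) + 1) / (1 + q ^ n) * x ^ n| ≤ ((n : ℝ) + 1) * |x| ^ n := by
  rw [div_mul_eq_mul_div, abs_div, abs_mul, abs_pow, abs_of_pos (by positivity : (0 : ℝ) < n + 1),
    abs_of_pos (by positivity : 0 < 1 + q ^ n)]
  exact div_le_self (by positivity) (le_add_of_nonneg_right (by positivity))

lemma summable_kernelSeries_term (hq : 0 ≤ q) {x : ℝ} (hx : |x| < 1) :
    Summable fun n : ℕ => ((n : ℝ) + 1) / (1 + q ^ n) * x ^ n :=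
  .of_norm_bounded (hasSum_succ_mul_geometric (by rwa [abs_abs])).summable
    (abs_kernelSeries_term_le hq · x)

lemma continuousOn_kernelSeries (hq : 0 ≤ q) {ρ : ℝ} (hρ0 : 0 ≤ ρ) (hρ1 : ρ < 1) :
    ContinuousOn (kernelSeries q) (Icc (-ρ) ρ) := by
  refine continuousOn_tsum (fun n => by fun_prop)
    (hasSum_succ_mul_geometric (by rwa [abs_of_nonneg hρ0])).summable fun n x hx => ?_
  refine (abs_kernelSeries_term_le hq n x).trans ?_
  gcongr
  exact abs_le.2 hx

lemma kernelSeries_zero (q : ℝ) : kernelSeries q 0 = 1 / 2 := by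
  rw [kernelSeries, tsum_eq_single 0 fun n hn => by simp [hn]]
  norm_num

lemma kernelSeries_le (hq0 : 0 ≤ q) (hq1 : q < 1) {x : ℝ} (hx : |x| < 1) :
    kernelSeries q x ≤ 1 / (1 - x) ^ 2 + 1 / (1 - q) ^ 2 - 3 / 2 := by
  have hbound : HasSum
      (fun n : ℕ => ((n : ℝ) + 1) * x ^ n + ((n : ℝ) + 1) * q ^ n - if n = 0 then 3 / 2 else 0)
      (1 / (1 - x) ^ 2 + 1 / (1 - q) ^ 2 - 3 / 2) :=
    ((hasSum_succ_mul_geometric hx).add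
      (hasSum_succ_mul_geometric (by rwa [abs_of_nonneg hq0]))).sub (hasSum_ite_eq 0 _)
  refine hasSum_le (fun n => ?_) (summable_kernelSeries_term hq0 hx).hasSum hbound
  rcases eq_or_ne n 0 with rfl | hn
  · norm_num
  have hxn : -1 ≤ x ^ n :=
    (abs_le.1 ((abs_pow x n).trans_le (pow_le_one₀ (abs_nonneg x) hx.le))).1
  rw [if_neg hn, sub_zero, div_mul_eq_mul_div, mul_div_assoc, ← mul_add]
  exact mul_le_mul_of_nonneg_left (div_one_add_le_add hxn (by positivity)) (by positivity)

lemma exists_kernelSeries_neg_sq_eq_zero :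
    ∃ t ∈ Icc (0 : ℝ) (3 / 4), kernelSeries ((1 / 10) ^ 2) (-t ^ 2) = 0 := by
  have hmaps : MapsTo (fun t : ℝ => -t ^ 2) (Icc 0 (3 / 4)) (Icc (-(9 / 16)) (9 / 16)) :=
    fun t ht => ⟨by nlinarith [ht.1, ht.2], by nlinarith⟩
  have hcont : ContinuousOn (fun t : ℝ => kernelSeries ((1 / 10) ^ 2) (-t ^ 2)) (Icc 0 (3 / 4)) :=
    (continuousOn_kernelSeries (by norm_num) (by norm_num) (by norm_num)).comp
      (by fun_prop) hmaps
  have hneg : kernelSeries ((1 / 10) ^ 2) (-(3 / 4) ^ 2) < 0 :=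
    (kernelSeries_le (by norm_num) (by norm_num) (by norm_num)).trans_lt (by norm_num)
  exact intermediate_value_Icc' (by norm_num) hcont
    ⟨hneg.le, by norm_num [kernelSeries_zero]⟩

end KernelSeries

theorem stmt_6 :
    ∃ lam : ℝ → ℝ, Measurable lam ∧
      (∃ C : ℝ, 0 < C ∧ ∀ r ∈ Set.Ico (0:ℝ) 1, 1 / C ≤ lam r ∧ lam r ≤ C) ∧
      ∃ z w : ℂ, ‖z‖ < 1 ∧ ‖w‖ < 1 ∧
        ∑' n : ℕ, ((1 / (2 * π * ∫ r in (0:ℝ)..1, r ^ (2*n+1) * lam r) : ℝ) : ℂ)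
            * (z * (starRingEnd ℂ) w) ^ n = 0 := by
  obtain ⟨t, ht, hzero⟩ := exists_kernelSeries_neg_sq_eq_zero
  have ht1 : ‖(t : ℂ)‖ < 1 := by
    rw [Complex.norm_real, Real.norm_of_nonneg ht.1]
    linarith [ht.2]
  refine ⟨stepWeight (1 + (1 / 10)⁻¹ ^ 2) (1 / 10), measurable_stepWeight _ _,
    ⟨101, by norm_num, fun r _ => ?_⟩, -t, t, by rwa [norm_neg], ht1, ?_⟩
  · unfold stepWeight
    split_ifs <;> norm_num
  have hzw : -(t : ℂ) * (starRingEnd ℂ) t = ((-t ^ 2 : ℝ) : ℂ) := by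
    simp [sq]
  simp_rw [hzw, bergmanCoeff_stepWeight (by norm_num : (0 : ℝ) < 1 / 10) (by norm_num),
    ← Complex.ofReal_pow, ← Complex.ofReal_mul, ← Complex.ofReal_tsum, mul_assoc, tsum_mul_left]
  rw [kernelSeries] at hzero
  rw [hzero, mul_zero, Complex.ofReal_zero]
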